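/- Define H₂(t) = √(3(3-t)/(1-t)) - ((3-2t)/2)·arccos(t/(3-2t)) for t ∈ [0,1). Then H₂(0) = 3 - 3π/4 > 0, H₂'(0) = (3+π)/2 > 0, and H₂''(t) = (√3/2)·(7 + 3/(1-t))·1/((3-2t)(1-t)^{3/2}√(3-t)) > 0 for all t ∈ [0,1). Consequently all Taylor coefficients of H₂ about t = 0 are nonnegative. -/

import Mathlib

/-!
The derivative of the arccos term is algebraic, and after two differentiations `H₂''` is the product
`√3/4 · (7 + 3 (1-t)⁻¹) · (3/2 - t)⁻¹ · (1-t)^(-3/2) · (3-t)^(-1/2)`. Every factor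
`(a - t)^(-p)` with `a ≥ 1`, `p > 0` is absolutely monotone on `(-∞, 1)`, its `n`-th derivative
being `p (p+1) ⋯ (p+n-1) (a - t)^(-p-n)`; absolute monotonicity survives sums, nonnegative
multiples and, by the Leibniz rule, products. Hence every derivative of `H₂''` at `0` is
nonnegative, and the first two Taylor coefficients `H₂ 0`, `H₂' 0` are positive by evaluation.
-/

open Real Set

noncomputable section

def H₂ (t : ℝ) : ℝ :=
  Real.sqrt (3 * (3 - t) / (1 - t)) - (3 - 2 * t) / 2 * arccos (t / (3 - 2 * t))

namespace AbsolutelyMonotoneOn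

variable {f g : ℝ → ℝ} {s t : Set ℝ}

theorem mono (hf : AbsolutelyMonotoneOn f s) (hts : t ⊆ s) : AbsolutelyMonotoneOn f t := by
  obtain ⟨p, hp, hp_nn⟩ := hf
  exact ⟨p, hp.mono hts, fun n _ hx ↦ hp_nn n (hts hx)⟩

theorem congr (hf : AbsolutelyMonotoneOn f s) (hfg : EqOn g f s) : AbsolutelyMonotoneOn g s := by
  obtain ⟨p, hp, hp_nn⟩ := hf
  exact ⟨p, hp.congr hfg, hp_nn⟩

theorem const {c : ℝ} (hc : 0 ≤ c) : AbsolutelyMonotoneOn (fun _ ↦ c) s :=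
  of_contDiff contDiff_const fun n _ _ ↦ by
    rw [iteratedDeriv_const]
    split_ifs <;> simp [hc]

theorem mul (hs : UniqueDiffOn ℝ s) (hf : AbsolutelyMonotoneOn f s)
    (hg : AbsolutelyMonotoneOn g s) : AbsolutelyMonotoneOn (f * g) s := by
  rw [iff_iteratedDerivWithin_nonneg hs]
  refine ⟨hf.contDiffOn.mul hg.contDiffOn, fun n x hx ↦ ?_⟩
  rw [iteratedDerivWithin_mul hx hs (hf.contDiffOn.of_le (mod_cast le_top) x hx)
    (hg.contDiffOn.of_le (mod_cast le_top) x hx)]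
  refine Finset.sum_nonneg fun i _ ↦ ?_
  have := hf.iteratedDerivWithin_nonneg hs i hx
  have := hg.iteratedDerivWithin_nonneg hs (n - i) hx
  positivity

end AbsolutelyMonotoneOn

theorem absolutelyMonotoneOn_sub_rpow_neg (a : ℝ) {p : ℝ} (hp : 0 < p) :
    AbsolutelyMonotoneOn (fun x ↦ (a - x) ^ (-p)) (Iio a) := by
  rw [AbsolutelyMonotoneOn.iff_iteratedDerivWithin_nonneg isOpen_Iio.uniqueDiffOn]
  refine ⟨fun x hx ↦ ?_, fun n x hx ↦ ?_⟩
  · have : a - x ≠ 0 := (sub_pos.2 hx).ne'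
    exact ((contDiff_const.sub contDiff_id).contDiffAt.rpow_const_of_ne this).contDiffWithinAt
  · rw [iteratedDerivWithin_of_isOpen isOpen_Iio hx,
      iteratedDeriv_comp_const_sub n (fun y : ℝ ↦ y ^ (-p)), iteratedDeriv_eq_iterate]
    dsimp only
    rw [iter_deriv_rpow_const, smul_eq_mul, ← mul_assoc,
      ← ascPochhammer_eval_neg_eq_descPochhammer, neg_neg]
    exact mul_nonneg (ascPochhammer_pos n p hp).le (rpow_nonneg (sub_pos.2 hx).le _)

def H₂' (t : ℝ) : ℝ :=
  √3 / 2 * √(3 - t) / √(1 - t) ^ 3 + arccos (t / (3 - 2 * t))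

def H₂'' (t : ℝ) : ℝ :=
  √3 / 2 * (7 + 3 / (1 - t)) * (1 / ((3 - 2 * t) * (1 - t) ^ ((3 : ℝ) / 2) * √(3 - t)))

section Derivatives

variable {t : ℝ}

theorem hasDerivAt_arccos_div (ht : t < 1) :
    HasDerivAt (fun x ↦ arccos (x / (3 - 2 * x)))
      (-(√3 / ((3 - 2 * t) * √(1 - t) * √(3 - t)))) t := by
  have h32 : 0 < 3 - 2 * t := by linarith
  have hu : HasDerivAt (fun x ↦ x / (3 - 2 * x)) (3 / (3 - 2 * t) ^ 2) t :=
    ((hasDerivAt_id t).div (((hasDerivAt_id t).const_mul 2).const_sub 3)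
      h32.ne').congr_deriv (by simp only [id]; ring)
  have hlt : t / (3 - 2 * t) < 1 := (div_lt_one h32).2 (by linarith)
  have hgt : -1 < t / (3 - 2 * t) := by rw [lt_div_iff₀ h32]; linarith
  have hsqrt : √(1 - (t / (3 - 2 * t)) ^ 2) = √3 * √(1 - t) * √(3 - t) / (3 - 2 * t) := by
    have : 1 - (t / (3 - 2 * t)) ^ 2 = 3 * (1 - t) * (3 - t) / (3 - 2 * t) ^ 2 := by
      rw [div_pow, one_sub_div (by positivity)]
      ring
    rw [this, sqrt_div' _ (sq_nonneg _), sqrt_sq h32.le, sqrt_mul (by norm_num; linarith),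
      sqrt_mul (by norm_num)]
  refine ((hasDerivAt_arccos hgt.ne' hlt.ne).comp t hu).congr_deriv ?_
  have h1 : 0 < √(1 - t) := sqrt_pos.2 (by linarith)
  have h3 : 0 < √(3 - t) := sqrt_pos.2 (by linarith)
  rw [hsqrt]
  field_simp
  rw [sq_sqrt (by norm_num)]

theorem hasDerivAt_H₂ (ht : t < 1) : HasDerivAt H₂ (H₂' t) t := by
  have h1 : 0 < 1 - t := by linarith
  have h3 : 0 < 3 - t := by linarith
  have hq : HasDerivAt (fun x ↦ 3 * (3 - x) / (1 - x)) (6 / (1 - t) ^ 2) t :=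
    ((((hasDerivAt_id t).const_sub 3).const_mul 3).div ((hasDerivAt_id t).const_sub 1)
      h1.ne').congr_deriv (by simp only [id]; ring)
  have hlin : HasDerivAt (fun x ↦ (3 - 2 * x) / 2) (-1) t :=
    ((((hasDerivAt_id t).const_mul 2).const_sub 3).div_const 2).congr_deriv (by simp)
  refine ((hq.sqrt (by positivity)).sub (hlin.mul (hasDerivAt_arccos_div ht))).congr_deriv ?_
  rw [sqrt_div' _ h1.le, sqrt_mul (by norm_num), H₂']
  have hs : 0 < √(1 - t) := sqrt_pos.2 h1
  have hr : 0 < √(3 - t) := sqrt_pos.2 h3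
  have hc : 3 - 2 * t ≠ 0 := by linarith
  have hs2 : √(1 - t) ^ 2 = 1 - t := sq_sqrt h1.le
  have hr2 : √(3 - t) ^ 2 = 3 - t := sq_sqrt h3.le
  have hq2 : √3 ^ 2 = 3 := sq_sqrt (by norm_num)
  -- an atom for `field_simp`, which would otherwise not recognise `3 - 2 * t` as nonzero
  set c := 3 - 2 * t
  field_simp
  linear_combination (6 * (√(1 - t) ^ 2 + (1 - t)) + (1 - t) ^ 2 * √3 ^ 2) * hs2 +
    ((1 - t) ^ 3 - (1 - t) ^ 2 * (3 - t)) * hq2 - (1 - t) ^ 2 * √3 ^ 2 * hr2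

theorem hasDerivAt_H₂' (ht : t < 1) : HasDerivAt H₂' (H₂'' t) t := by
  have h1 : 0 < 1 - t := by linarith
  have h3 : 0 < 3 - t := by linarith
  have hs1 : HasDerivAt (fun x ↦ √(1 - x)) (-1 / (2 * √(1 - t))) t :=
    ((hasDerivAt_id t).const_sub 1).sqrt h1.ne'
  have hs3 : HasDerivAt (fun x ↦ √(3 - x)) (-1 / (2 * √(3 - t))) t :=
    ((hasDerivAt_id t).const_sub 3).sqrt h3.ne'
  refine ((((hs3.const_mul (√3 / 2)).div (hs1.fun_pow 3) (by positivity))).add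
    (hasDerivAt_arccos_div ht)).congr_deriv ?_
  rw [H₂'', rpow_div_two_eq_sqrt _ h1.le, rpow_ofNat]
  have hs : 0 < √(1 - t) := sqrt_pos.2 h1
  have hr : 0 < √(3 - t) := sqrt_pos.2 h3
  have hc : 3 - 2 * t ≠ 0 := by linarith
  have hs2 : √(1 - t) ^ 2 = 1 - t := sq_sqrt h1.le
  have hr2 : √(3 - t) ^ 2 = 3 - t := sq_sqrt h3.le
  set c := 3 - 2 * t with hc_def
  simp only [Nat.cast_ofNat, Nat.reduceSub]
  field_simp
  linear_combination
    (-(1 - t) * c - 4 * (1 - t) * (√(1 - t) ^ 2 + (1 - t)) - 2 * (10 - 7 * t)) * hs2 +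
      3 * (1 - t) * c * hr2 + (3 * (1 - t) * (3 - t) - (1 - t) ^ 2) * hc_def

theorem deriv_deriv_H₂ : EqOn (deriv (deriv H₂)) H₂'' (Iio 1) := by
  intro t ht
  have hderiv : deriv H₂ =ᶠ[nhds t] H₂' := by
    filter_upwards [isOpen_Iio.mem_nhds ht] with x hx using (hasDerivAt_H₂ hx).deriv
  rw [hderiv.deriv_eq, (hasDerivAt_H₂' ht).deriv]

end Derivatives

theorem H₂_zero : H₂ 0 = 3 - 3 * π / 4 := by
  norm_num [H₂, show (9 : ℝ) = 3 ^ 2 by norm_num]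
  ring

theorem deriv_H₂_zero : deriv H₂ 0 = (3 + π) / 2 := by
  rw [(hasDerivAt_H₂ one_pos).deriv]
  norm_num [H₂']
  linear_combination sq_sqrt (show (0 : ℝ) ≤ 3 by norm_num) / 2

theorem H₂''_pos {t : ℝ} (ht : t < 1) : 0 < H₂'' t := by
  have h1 : 0 < 1 - t := by linarith
  have h7 : 0 < 7 + 3 / (1 - t) := by positivity
  have hden : 0 < (3 - 2 * t) * (1 - t) ^ ((3 : ℝ) / 2) * √(3 - t) :=
    mul_pos (mul_pos (by linarith) (rpow_pos_of_pos h1 _)) (sqrt_pos.2 (by linarith))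
  exact mul_pos (mul_pos (by positivity) h7) (one_div_pos.2 hden)

theorem absolutelyMonotoneOn_H₂'' : AbsolutelyMonotoneOn H₂'' (Iio 1) := by
  have hU : UniqueDiffOn ℝ (Iio (1 : ℝ)) := isOpen_Iio.uniqueDiffOn
  have atom (a : ℝ) {p : ℝ} (ha : 1 ≤ a) (hp : 0 < p) :
      AbsolutelyMonotoneOn (fun x ↦ (a - x) ^ (-p)) (Iio 1) :=
    (absolutelyMonotoneOn_sub_rpow_neg a hp).mono (Iio_subset_Iio ha)
  refine ((((((AbsolutelyMonotoneOn.const (by norm_num : (0 : ℝ) ≤ 7)).add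
    ((atom 1 le_rfl one_pos).smul (by norm_num : (0 : ℝ) ≤ 3))).mul hU
    (atom (3 / 2) (by norm_num) one_pos)).mul hU
    (atom 1 le_rfl (by norm_num : (0 : ℝ) < 3 / 2))).mul hU
    (atom 3 (by norm_num) (by norm_num : (0 : ℝ) < 1 / 2))).smul
    (by positivity : 0 ≤ √3 / 4)).congr fun x hx ↦ ?_
  have h1 : 0 < 1 - x := sub_pos.2 hx
  have h3 : 0 < 3 - x := by linarith [mem_Iio.1 hx]
  simp only [H₂'', Pi.mul_apply, Pi.add_apply, Pi.smul_apply, smul_eq_mul, rpow_neg_one,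
    rpow_neg h1.le, rpow_neg h3.le, ← sqrt_eq_rpow]
  have : 0 < (1 - x) ^ ((3 : ℝ) / 2) := by positivity
  have : 0 < √(3 - x) := sqrt_pos.2 h3
  field_simp
  ring

theorem iteratedDeriv_H₂_zero_nonneg (m : ℕ) : 0 ≤ iteratedDeriv m H₂ 0 := by
  have h0 : (0 : ℝ) ∈ Iio 1 := by norm_num
  match m with
  | 0 => rw [iteratedDeriv_zero, H₂_zero]; linarith [pi_lt_four]
  | 1 => rw [iteratedDeriv_one, deriv_H₂_zero]; positivity
  | m + 2 =>
    rw [iteratedDeriv_succ', iteratedDeriv_succ',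
      deriv_deriv_H₂.iteratedDeriv_of_isOpen isOpen_Iio m h0,
      ← iteratedDerivWithin_of_isOpen isOpen_Iio h0]
    exact absolutelyMonotoneOn_H₂''.iteratedDerivWithin_nonneg isOpen_Iio.uniqueDiffOn m h0

/-- H₂(0) = 3 - 3π/4 > 0, H₂'(0) = (3+π)/2 > 0, and
H₂''(t) = (√3/2)(7 + 3/(1-t))/((3-2t)(1-t)^{3/2}√(3-t)) > 0 on [0,1);
consequently all Taylor coefficients of H₂ at 0 are nonnegative. -/
theorem stmt_14 :
    H₂ 0 = 3 - 3 * π / 4 ∧ (0 : ℝ) < 3 - 3 * π / 4 ∧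
    deriv H₂ 0 = (3 + π) / 2 ∧ (0 : ℝ) < (3 + π) / 2 ∧
    (∀ t ∈ Ico (0 : ℝ) 1,
      deriv (deriv H₂) t =
        Real.sqrt 3 / 2 * (7 + 3 / (1 - t)) *
          (1 / ((3 - 2 * t) * (1 - t) ^ ((3 : ℝ) / 2) * Real.sqrt (3 - t))) ∧
      0 < Real.sqrt 3 / 2 * (7 + 3 / (1 - t)) *
          (1 / ((3 - 2 * t) * (1 - t) ^ ((3 : ℝ) / 2) * Real.sqrt (3 - t)))) ∧
    (∀ m : ℕ, 0 ≤ iteratedDeriv m H₂ 0) :=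
  ⟨H₂_zero, by linarith [pi_lt_four], deriv_H₂_zero, by positivity,
    fun _ ht ↦ ⟨deriv_deriv_H₂ ht.2, H₂''_pos ht.2⟩, iteratedDeriv_H₂_zero_nonneg⟩

end
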